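/- If no hospital is under-predicted in the prefix truncation (i.e., each hospital's hospital-optimal stable partner survives on its truncated list), then the hospital-optimal stable matching μ*_H of I exists in the truncated instance Î, and hence resident-proposing deferred acceptance on Î matches every agent and yields a matching stable in I. -/

import Mathlib

/-- A stable matching instance: each resident has a preference list over hospitals
and each hospital has a preference list over residents. -/
structure SMInstance (R H : Type*) where
  Lr : R → List H
  Lh : H → List R

/-- A (partial) matching, given by mutually consistent partner functions. -/
structure SMatching (R H : Type*) where
  mr : R → Option H
  mh : H → Option R
  consistent : ∀ r h, mr r = some h ↔ mh h = some r

/-- An agent with preference list `l`, currently matched according to `o`,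
strictly prefers `x` to its current situation: `x` is acceptable, and the agent
is either unmatched or ranks `x` above its current partner. -/
def prefersOver {α : Type*} [DecidableEq α] (l : List α) (x : α) (o : Option α) : Prop :=
  x ∈ l ∧ ∀ y, o = some y → l.idxOf x < l.idxOf y

/-- With respect to list `l`, outcome `o₁` is weakly preferred to outcome `o₂`:
whenever `o₂` is matched, so is `o₁`, to a partner of weakly better rank. -/
def weaklyPrefers {α : Type*} [DecidableEq α] (l : List α) (o₁ o₂ : Option α) : Prop :=
  ∀ y, o₂ = some y → ∃ x, o₁ = some x ∧ l.idxOf x ≤ l.idxOf y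

variable {R H : Type*} [DecidableEq R] [DecidableEq H]

/-- `(r, h)` is a blocking pair for `μ` in instance `I`. -/
def SMInstance.Blocking (I : SMInstance R H) (μ : SMatching R H) (r : R) (h : H) : Prop :=
  prefersOver (I.Lr r) h (μ.mr r) ∧ prefersOver (I.Lh h) r (μ.mh h)

/-- The matching `μ` exists in the instance `I`: matched partners are on each other's lists. -/
def SMInstance.ExistsIn (I : SMInstance R H) (μ : SMatching R H) : Prop :=
  (∀ r h, μ.mr r = some h → h ∈ I.Lr r) ∧ (∀ h r, μ.mh h = some r → r ∈ I.Lh h)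

/-- `μ` is stable in `I`: it exists in `I` and admits no blocking pair. -/
def SMInstance.IsStable (I : SMInstance R H) (μ : SMatching R H) : Prop :=
  I.ExistsIn μ ∧ ∀ r h, ¬ I.Blocking μ r h

/-- Preference lists are strict (no repetitions). -/
def SMInstance.Nodups (I : SMInstance R H) : Prop :=
  (∀ r, (I.Lr r).Nodup) ∧ (∀ h, (I.Lh h).Nodup)

/-- Preference lists are complete: every agent ranks every agent on the other side. -/
def SMInstance.Complete (I : SMInstance R H) : Prop :=
  (∀ r h, h ∈ I.Lr r) ∧ (∀ h r, r ∈ I.Lh h)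

/-!
The matching `μ*_H` survives the truncation, and every list of `Î` is a sublist of the
corresponding list of `I`, so `μ*_H` is stable in `Î`. In a complete balanced instance every
stable matching is perfect; hence `μ*_H` matches every resident, and the resident-optimal stable
matching `μ̂` of `Î` does so too, and therefore, by counting, every hospital. A pair blocking `μ̂`
in `I` involves a resident whom its hospital ranks above its `Î`-partner, hence inside that
hospital's prefix; so the pair survives the truncation and would block `μ̂` in `Î`.
-/

namespace List

variable {α : Type*} [DecidableEq α]

theorem Sublist.idxOf_lt_idxOf_iff {l₁ l₂ : List α} (hs : l₁ <+ l₂) (hl : l₂.Nodup) {a b : α}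
    (ha : a ∈ l₁) (hb : b ∈ l₁) : l₁.idxOf a < l₁.idxOf b ↔ l₂.idxOf a < l₂.idxOf b := by
  induction hs with
  | slnil => simp at ha
  | cons _ hs ih
  | cons_cons _ hs ih => grind [nodup_cons, Sublist.subset]

end List

theorem prefersOver_sublist_iff {α : Type*} [DecidableEq α] {l₁ l₂ : List α} (hs : l₁.Sublist l₂)
    (hl : l₂.Nodup) {x : α} {o : Option α} (hx : x ∈ l₁) (ho : ∀ y, o = some y → y ∈ l₁) :
    prefersOver l₁ x o ↔ prefersOver l₂ x o := by
  simp only [prefersOver, hx, hs.subset hx, true_and]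
  exact forall_congr' fun y => forall_congr' fun hy => hs.idxOf_lt_idxOf_iff hl hx (ho y hy)

theorem weaklyPrefers.ne_none {α : Type*} [DecidableEq α] {l : List α} {o₁ o₂ : Option α}
    (h : weaklyPrefers l o₁ o₂) (ho₂ : o₂ ≠ none) : o₁ ≠ none := by
  obtain ⟨y, rfl⟩ := Option.ne_none_iff_exists'.mp ho₂
  obtain ⟨x, rfl, -⟩ := h y rfl
  exact Option.some_ne_none x

namespace SMatching

def flip {R H : Type*} (μ : SMatching R H) : SMatching H R where
  mr := μ.mh
  mh := μ.mr
  consistent h r := (μ.consistent r h).symm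

theorem mh_ne_none_of_mr_ne_none {R H : Type*} [Fintype R] [Fintype H]
    (hcard : Fintype.card R = Fintype.card H) (μ : SMatching R H) (hR : ∀ r, μ.mr r ≠ none) :
    ∀ h, μ.mh h ≠ none := by
  choose f hf using fun r => Option.ne_none_iff_exists'.mp (hR r)
  have hf' : ∀ r, μ.mh (f r) = some r := fun r => (μ.consistent r (f r)).mp (hf r)
  have hinj : Function.Injective f := fun a b hab =>
    Option.some_injective _ ((hf' a).symm.trans (hab ▸ hf' b))
  intro h
  obtain ⟨r, rfl⟩ := ((Fintype.bijective_iff_injective_and_card f).mpr ⟨hinj, hcard⟩).2 h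
  simp [hf']

end SMatching

namespace SMInstance

variable {R H : Type*} {I J : SMInstance R H} {μ : SMatching R H}

def IsSubinstance (J I : SMInstance R H) : Prop :=
  (∀ r, (J.Lr r).Sublist (I.Lr r)) ∧ (∀ h, (J.Lh h).Sublist (I.Lh h))

theorem IsSubinstance.existsIn (hJI : J.IsSubinstance I) (hμ : J.ExistsIn μ) : I.ExistsIn μ :=
  ⟨fun r h hrh => (hJI.1 r).subset (hμ.1 r h hrh), fun h r hhr => (hJI.2 h).subset (hμ.2 h r hhr)⟩

section Blocking

variable [DecidableEq R] [DecidableEq H]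

theorem blocking_iff_of_isSubinstance (hJI : J.IsSubinstance I) (hN : I.Nodups)
    (hμ : J.ExistsIn μ) {r : R} {h : H} (hh : h ∈ J.Lr r) (hr : r ∈ J.Lh h) :
    J.Blocking μ r h ↔ I.Blocking μ r h :=
  and_congr (prefersOver_sublist_iff (hJI.1 r) (hN.1 r) hh (hμ.1 r))
    (prefersOver_sublist_iff (hJI.2 h) (hN.2 h) hr (hμ.2 h))

theorem IsStable.of_isSubinstance (hμ : I.IsStable μ) (hJI : J.IsSubinstance I)
    (hN : I.Nodups) (hJμ : J.ExistsIn μ) : J.IsStable μ :=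
  ⟨hJμ, fun r h hb =>
    hμ.2 r h ((blocking_iff_of_isSubinstance hJI hN hJμ hb.1.1 hb.2.1).mp hb)⟩

/-- An unmatched resident and an unmatched hospital would block, and in a balanced market an
unmatched resident forces an unmatched hospital. -/
theorem IsStable.mr_ne_none [Fintype R] [Fintype H] (hcard : Fintype.card R = Fintype.card H)
    (hC : I.Complete) (hμ : I.IsStable μ) (r : R) : μ.mr r ≠ none := by
  intro hr
  obtain ⟨h, hh⟩ : ∃ h, μ.mh h = none := by
    by_contra! hH
    exact μ.flip.mh_ne_none_of_mr_ne_none hcard.symm hH r hr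
  exact hμ.2 r h ⟨⟨hC.1 r h, by simp [hr]⟩, ⟨hC.2 h r, by simp [hh]⟩⟩

end Blocking

def IsPrefixTruncation [DecidableEq R] (J I : SMInstance R H) (ρ : H → ℕ) : Prop :=
  (∀ h, J.Lh h = (I.Lh h).take (ρ h)) ∧
    (∀ r, J.Lr r = (I.Lr r).filter (fun h => decide (r ∈ J.Lh h)))

namespace IsPrefixTruncation

variable [DecidableEq R] {ρ : H → ℕ}

theorem isSubinstance (hJ : J.IsPrefixTruncation I ρ) : J.IsSubinstance I :=
  ⟨fun r => hJ.2 r ▸ List.filter_sublist, fun h => hJ.1 h ▸ List.take_sublist _ _⟩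

theorem mem_lr_iff (hJ : J.IsPrefixTruncation I ρ) {r : R} {h : H} :
    h ∈ J.Lr r ↔ h ∈ I.Lr r ∧ r ∈ J.Lh h := by
  simp [hJ.2 r]

theorem existsIn (hJ : J.IsPrefixTruncation I ρ) (hμ : I.ExistsIn μ)
    (hsurv : ∀ h r, μ.mh h = some r → r ∈ J.Lh h) : J.ExistsIn μ :=
  ⟨fun r h hrh => hJ.mem_lr_iff.mpr ⟨hμ.1 r h hrh, hsurv h r ((μ.consistent r h).mp hrh)⟩,
    hsurv⟩

theorem mem_lh_of_idxOf_lt (hJ : J.IsPrefixTruncation I ρ) {h : H} {r r' : R}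
    (hr : r ∈ I.Lh h) (hr' : r' ∈ J.Lh h) (hlt : (I.Lh h).idxOf r < (I.Lh h).idxOf r') :
    r ∈ J.Lh h := by
  rw [hJ.1 h] at hr' ⊢
  rw [List.mem_take_iff_idxOf_lt hr]
  exact hlt.trans ((List.mem_take_iff_idxOf_lt (List.mem_of_mem_take hr')).mp hr')

end IsPrefixTruncation

theorem IsStable.of_isPrefixTruncation [DecidableEq R] [DecidableEq H] {ρ : H → ℕ}
    (hμ : J.IsStable μ) (hJ : J.IsPrefixTruncation I ρ) (hN : I.Nodups)
    (hH : ∀ h, μ.mh h ≠ none) : I.IsStable μ := by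
  refine ⟨hJ.isSubinstance.existsIn hμ.1, fun r h hb => ?_⟩
  obtain ⟨r', hr'⟩ := Option.ne_none_iff_exists'.mp (hH h)
  have hr : r ∈ J.Lh h := hJ.mem_lh_of_idxOf_lt hb.2.1 (hμ.1.2 h r' hr') (hb.2.2 r' hr')
  have hh : h ∈ J.Lr r := hJ.mem_lr_iff.mpr ⟨hb.1.1, hr⟩
  exact hμ.2 r h ((blocking_iff_of_isSubinstance hJ.isSubinstance hN hμ.1 hh hr).mpr hb)

end SMInstance

theorem PDA_no_underprediction_perfect_general
    {R H : Type*} [DecidableEq R] [DecidableEq H] [Fintype R] [Fintype H]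
    (hcard : Fintype.card R = Fintype.card H)
    (I Ihat : SMInstance R H) (hC : I.Complete) (hN : I.Nodups)
    (ρ : H → ℕ)
    (hLh : ∀ h, Ihat.Lh h = (I.Lh h).take (ρ h))
    (hLr : ∀ r, Ihat.Lr r = (I.Lr r).filter (fun h => decide (r ∈ Ihat.Lh h)))
    (muH : SMatching R H) (hHstab : I.IsStable muH)
    (hnoUnder : ∀ h r, muH.mh h = some r → r ∈ Ihat.Lh h)
    (muHat : SMatching R H) (hhat : Ihat.IsStable muHat)
    (hropt : ∀ ν : SMatching R H, Ihat.IsStable ν →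
      ∀ r, weaklyPrefers (Ihat.Lr r) (muHat.mr r) (ν.mr r)) :
    Ihat.ExistsIn muH ∧ ((∀ r, muHat.mr r ≠ none) ∧ (∀ h, muHat.mh h ≠ none)) ∧
      I.IsStable muHat := by
  have hJ : Ihat.IsPrefixTruncation I ρ := ⟨hLh, hLr⟩
  have hEx : Ihat.ExistsIn muH := hJ.existsIn hHstab.1 hnoUnder
  have hHstab' : Ihat.IsStable muH := hHstab.of_isSubinstance hJ.isSubinstance hN hEx
  have hR : ∀ r, muHat.mr r ≠ none := fun r =>
    (hropt muH hHstab' r).ne_none (hHstab.mr_ne_none hcard hC r)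
  have hH : ∀ h, muHat.mh h ≠ none := muHat.mh_ne_none_of_mr_ne_none hcard hR
  exact ⟨hEx, ⟨hR, hH⟩, hhat.of_isPrefixTruncation hJ hN hH⟩

/-- If no hospital is under-predicted (each hospital's hospital-optimal
stable partner survives on its truncated list), then `muH` exists in `Ihat`, and the
resident-optimal stable matching `muHat` of `Ihat` (the output of resident-proposing deferred
acceptance on `Ihat`) matches every agent and is stable in `I`. -/
theorem PDA_no_underprediction_perfect
    {R H : Type*} [DecidableEq R] [DecidableEq H] [Fintype R] [Fintype H]
    (hcard : Fintype.card R = Fintype.card H)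
    (I Ihat : SMInstance R H) (hC : I.Complete) (hN : I.Nodups)
    (ρ : H → ℕ)
    (hLh : ∀ h, Ihat.Lh h = (I.Lh h).take (ρ h))
    (hLr : ∀ r, Ihat.Lr r = (I.Lr r).filter (fun h => decide (r ∈ Ihat.Lh h)))
    (muH : SMatching R H) (hHstab : I.IsStable muH)
    (hHopt : ∀ ν : SMatching R H, I.IsStable ν →
      ∀ h, weaklyPrefers (I.Lh h) (muH.mh h) (ν.mh h))
    (hnoUnder : ∀ h r, muH.mh h = some r → r ∈ Ihat.Lh h)
    (muHat : SMatching R H) (hhat : Ihat.IsStable muHat)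
    (hropt : ∀ ν : SMatching R H, Ihat.IsStable ν →
      ∀ r, weaklyPrefers (Ihat.Lr r) (muHat.mr r) (ν.mr r)) :
    Ihat.ExistsIn muH ∧ ((∀ r, muHat.mr r ≠ none) ∧ (∀ h, muHat.mh h ≠ none)) ∧
      I.IsStable muHat :=
  PDA_no_underprediction_perfect_general hcard I Ihat hC hN ρ hLh hLr muH hHstab hnoUnder muHat hhat
    hropt
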